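/- arXiv:1907.09232 — 4 statements merged into one kernel-verified Lean document; each statement's English description precedes it below -/
import Mathlib

section
/- Let b : ℝ → ℝ satisfy |b(0)| + Lip(b) ≤ L, let x : [0,T] → ℝ be continuous with |x(s)| ≤ M for all s, let K : ℝ → ℝ≥0 be a bounded kernel with ∫K = 1 whose support is contained in [A,B], and let h > 0. Then for every t ∈ [0,T], |∫_0^t ∫_0^T (1/h)K((s-u)/h) b(x(s)) ds du - ∫_0^t b(x(u)) du| ≤ 2h·(sup_{|z|≤M} |b(z)|)·∫_A^B K(u)|u| du. -/
open Set MeasureTheory intervalIntegral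
open scoped Interval

/-!
Put `g := 𝟙_(0,T] · (b ∘ x)`, a measurable function bounded by `S := sup_{|z| ≤ M} |b z|`.
The substitution `s = u + h v` turns the inner integral into `∫ K(v) g(u + h v) dv`, and since
`∫ K = 1` the bias equals, after Fubini, `∫ K(v) (∫_0^t (g(u + h v) - g(u)) du) dv`. The inner
integral is the difference of the integrals of `g` over `[t, t + h v]` and `[0, h v]`, hence at
most `2 |h v| S` in absolute value.
-/

theorem intervalIntegrable_of_norm_le_const {E : Type*} [NormedAddCommGroup E] {g : ℝ → E}
    {S : ℝ} (hgm : AEStronglyMeasurable g) (hgS : ∀ y, ‖g y‖ ≤ S) (a b : ℝ) :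
    IntervalIntegrable g volume a b :=
  (intervalIntegrable_const (c := S)).mono_fun' hgm.restrict (ae_of_all _ hgS)

theorem norm_integral_comp_add_right_sub_le {E : Type*} [NormedAddCommGroup E] [NormedSpace ℝ E]
    {g : ℝ → E} {S : ℝ} (hgm : AEStronglyMeasurable g) (hgS : ∀ y, ‖g y‖ ≤ S) (t c : ℝ) :
    ‖(∫ u in (0:ℝ)..t, g (u + c)) - ∫ u in (0:ℝ)..t, g u‖ ≤ 2 * S * |c| := by
  have hgi := intervalIntegrable_of_norm_le_const hgm hgS
  rw [integral_comp_add_right, zero_add,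
    integral_interval_sub_interval_comm' (hgi _ _) (hgi _ _) (hgi _ _)]
  calc _ ≤ ‖∫ u in t..t + c, g u‖ + ‖∫ u in (0:ℝ)..c, g u‖ := norm_sub_le _ _
    _ ≤ S * |t + c - t| + S * |c - 0| :=
      add_le_add (norm_integral_le_of_norm_le_const fun y _ => hgS y)
        (norm_integral_le_of_norm_le_const fun y _ => hgS y)
    _ = 2 * S * |c| := by rw [add_sub_cancel_left, sub_zero]; ring

theorem integral_rescaled_kernel_mul (K g : ℝ → ℝ) {h : ℝ} (hh : 0 < h) (u : ℝ) :
    ∫ s, 1 / h * K ((s - u) / h) * g s = ∫ v, K v * g (u + h * v) := by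
  set φ : ℝ → ℝ := fun s => 1 / h * K ((s - u) / h) * g s
  have hφ (v : ℝ) : φ (u + h * v) = h⁻¹ * (K v * g (u + h * v)) := by
    simp only [φ, add_sub_cancel_left, mul_div_cancel_left₀ v hh.ne', one_div, mul_assoc]
  calc ∫ s, φ s = ∫ s, φ (u + s) := (integral_add_left_eq_self φ u).symm
    _ = h * ∫ v, φ (u + h * v) := by
      rw [Measure.integral_comp_mul_left (fun s => φ (u + s)), smul_eq_mul, abs_inv,
        abs_of_pos hh, mul_inv_cancel_left₀ hh.ne']
    _ = ∫ v, K v * g (u + h * v) := by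
      simp only [hφ, MeasureTheory.integral_const_mul, mul_inv_cancel_left₀ hh.ne']

theorem intervalIntegral_rescaled_kernel_mul (K f : ℝ → ℝ) {h T : ℝ} (hh : 0 < h) (hT : 0 ≤ T)
    (u : ℝ) :
    ∫ s in (0:ℝ)..T, 1 / h * K ((s - u) / h) * f s
      = ∫ v, K v * (Ioc 0 T).indicator f (u + h * v) := by
  rw [integral_of_le hT, ← MeasureTheory.integral_indicator measurableSet_Ioc,
    ← integral_rescaled_kernel_mul K _ hh u]
  congr 1 with s
  exact indicator_mul_right _ _ _

theorem ContinuousOn.measurable_indicator {α β : Type*} [TopologicalSpace α] [MeasurableSpace α]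
    [OpensMeasurableSpace α] [TopologicalSpace β] [MeasurableSpace β] [BorelSpace β] [Zero β]
    {f : α → β} {s : Set α} (hf : ContinuousOn f s) (hs : MeasurableSet s) :
    Measurable (s.indicator f) := by
  classical
  rw [← piecewise_eq_indicator]
  exact hf.measurable_piecewise continuousOn_const hs

theorem integrable_kernel_mul_shift_sub {K g : ℝ → ℝ} {S : ℝ} (hKi : Integrable K)
    (hgm : Measurable g) (hgS : ∀ y, |g y| ≤ S) (h : ℝ) (μ : Measure ℝ) [IsFiniteMeasure μ] :
    Integrable (fun p : ℝ × ℝ => K p.2 * (g (p.1 + h * p.2) - g p.1)) (μ.prod volume) := by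
  refine Integrable.mono' ((integrable_const (2 * S)).mul_prod hKi.norm) ?_ (ae_of_all _ ?_)
  · exact hKi.aestronglyMeasurable.comp_snd.mul
      ((hgm.comp (measurable_fst.add (measurable_snd.const_mul h))).sub
        (hgm.comp measurable_fst)).aestronglyMeasurable
  · rintro ⟨u, v⟩
    rw [norm_mul, Real.norm_eq_abs (_ - _), mul_comm]
    exact mul_le_mul_of_nonneg_right ((abs_sub _ _).trans (by linarith [hgS (u + h * v), hgS u]))
      (norm_nonneg _)

theorem abs_integral_kernel_smoothing_sub_le {K g : ℝ → ℝ} {S : ℝ} (hK0 : ∀ v, 0 ≤ K v)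
    (hKi : Integrable K) (hK1 : ∫ v, K v = 1) (hKmom : Integrable fun v => K v * |v|)
    (hgm : Measurable g) (hgS : ∀ y, |g y| ≤ S) (h t : ℝ) :
    |(∫ u in (0:ℝ)..t, ∫ v, K v * g (u + h * v)) - ∫ u in (0:ℝ)..t, g u|
      ≤ 2 * |h| * S * ∫ v, K v * |v| := by
  set F : ℝ → ℝ → ℝ := fun u v => K v * (g (u + h * v) - g u)
  have hgi := intervalIntegrable_of_norm_le_const hgm.aestronglyMeasurable hgS
  have : IsFiniteMeasure (volume.restrict (Ι (0:ℝ) t)) :=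
    isFiniteMeasure_restrict.2 measure_Ioc_lt_top.ne
  have hF : Integrable (Function.uncurry F) ((volume.restrict (Ι (0:ℝ) t)).prod volume) :=
    integrable_kernel_mul_shift_sub hKi hgm hgS h _
  have hsplit (u : ℝ) : ∫ v, K v * g (u + h * v) = (∫ v, F u v) + g u := by
    have hKg : Integrable fun v => K v * g (u + h * v) :=
      hKi.mul_bdd (hgm.comp (measurable_const.add (measurable_const_mul h))).aestronglyMeasurable
        (ae_of_all _ fun v => hgS _)
    rw [← sub_eq_iff_eq_add]
    calc _ = (∫ v, K v * g (u + h * v)) - ∫ v, K v * g u := by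
          rw [MeasureTheory.integral_mul_const, hK1, one_mul]
      _ = ∫ v, F u v := by rw [← integral_sub hKg (hKi.mul_const _)]; simp only [F, mul_sub]
  have hinner (v : ℝ) : |∫ u in (0:ℝ)..t, F u v| ≤ 2 * |h| * S * (K v * |v|) := by
    rw [intervalIntegral.integral_const_mul,
      intervalIntegral.integral_sub
        (intervalIntegrable_of_norm_le_const (g := fun u => g (u + h * v))
          (hgm.comp (measurable_add_const _)).aestronglyMeasurable (fun y => hgS _) 0 t)
        (hgi 0 t),
      abs_mul, abs_of_nonneg (hK0 v)]
    calc _ ≤ K v * (2 * S * |h * v|) :=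
          mul_le_mul_of_nonneg_left
            (norm_integral_comp_add_right_sub_le hgm.aestronglyMeasurable hgS t _) (hK0 v)
      _ = 2 * |h| * S * (K v * |v|) := by rw [abs_mul]; ring
  have hFi : IntervalIntegrable (fun u => ∫ v, F u v) volume 0 t :=
    intervalIntegrable_iff.2 hF.integral_prod_left
  rw [integral_congr fun u _ => hsplit u, intervalIntegral.integral_add hFi (hgi 0 t),
    add_sub_cancel_right, intervalIntegral_integral_swap hF]
  calc _ ≤ ∫ v, |∫ u in (0:ℝ)..t, F u v| := abs_integral_le_integral_abs
    _ ≤ ∫ v, 2 * |h| * S * (K v * |v|) :=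
      integral_mono_of_nonneg (ae_of_all _ fun v => abs_nonneg _) (hKmom.const_mul _)
        (ae_of_all _ hinner)
    _ = 2 * |h| * S * ∫ v, K v * |v| := integral_const_mul _ _

theorem integrable_mul_abs_of_support_subset_Icc {K : ℝ → ℝ} {A B : ℝ} (hKi : Integrable K)
    (hsupp : Function.support K ⊆ Icc A B) : Integrable fun v => K v * |v| := by
  refine (hKi.norm.const_mul (max |A| |B|)).mono'
    (hKi.aestronglyMeasurable.mul continuous_abs.aestronglyMeasurable) (ae_of_all _ fun v => ?_)
  by_cases hv : K v = 0
  · simp [hv]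
  · rw [norm_mul, Real.norm_eq_abs, Real.norm_eq_abs, abs_abs, mul_comm]
    exact mul_le_mul_of_nonneg_right (abs_le_max_abs_abs (hsupp hv).1 (hsupp hv).2)
      (abs_nonneg _)

theorem integral_eq_intervalIntegral_of_support_subset_Icc {E : Type*} [NormedAddCommGroup E]
    [NormedSpace ℝ E] {f : ℝ → E} {A B : ℝ} (hAB : A ≤ B) (hsupp : Function.support f ⊆ Icc A B) :
    ∫ v, f v = ∫ v in A..B, f v := by
  rw [integral_of_le hAB, ← integral_Icc_eq_integral_Ioc,
    setIntegral_eq_integral_of_forall_compl_eq_zero fun v hv =>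
      Function.notMem_support.1 fun hfv => hv (hsupp hfv)]

theorem abs_indicator_comp_le_iSup_Icc {b x : ℝ → ℝ} {s : Set ℝ} {M : ℝ} (hb : Continuous b)
    (hxM : ∀ y ∈ s, |x y| ≤ M) (y : ℝ) :
    |s.indicator (fun y => b (x y)) y| ≤ ⨆ z : Icc (-M) M, |b z| := by
  by_cases hy : y ∈ s
  · rw [indicator_of_mem hy]
    exact le_ciSup (isCompact_range (hb.abs.comp continuous_subtype_val)).bddAbove
      ⟨x y, abs_le.1 (hxM y hy)⟩
  · rw [indicator_of_notMem hy, abs_zero]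
    exact Real.iSup_nonneg fun z => abs_nonneg _

theorem bias_bound_general (T L M A B h : ℝ) (hh : 0 < h)
    (b : ℝ → ℝ)
    (hb : ∃ ℓ : ℝ, 0 ≤ ℓ ∧ (∀ z w : ℝ, |b z - b w| ≤ ℓ * |z - w|) ∧ |b 0| + ℓ ≤ L)
    (x : ℝ → ℝ) (hx : ContinuousOn x (Set.Icc 0 T))
    (hxM : ∀ s ∈ Set.Icc (0:ℝ) T, |x s| ≤ M)
    (K : ℝ → ℝ) (hK0 : ∀ v, 0 ≤ K v)
    (hKint : ∫ v : ℝ, K v = 1) (hsupp : Function.support K ⊆ Set.Icc A B) :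
    ∀ t ∈ Set.Icc (0:ℝ) T,
      |(∫ u in (0:ℝ)..t, ∫ s in (0:ℝ)..T, (1 / h) * K ((s - u) / h) * b (x s))
          - ∫ u in (0:ℝ)..t, b (x u)|
        ≤ 2 * h * (⨆ z : Set.Icc (-M) M, |b z.1|) * ∫ u in A..B, K u * |u| := by
  intro t ht
  obtain ⟨ℓ, hℓ0, hℓ, -⟩ := hb
  have hbc : Continuous b := (LipschitzWith.of_dist_le_mul (K := ℓ.toNNReal) fun z w => by
    simpa [Real.dist_eq, hℓ0] using hℓ z w).continuous
  set g := (Ioc 0 T).indicator fun s => b (x s)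
  have hgm : Measurable g :=
    (hbc.comp_continuousOn (hx.mono Ioc_subset_Icc_self)).measurable_indicator measurableSet_Ioc
  have hgS := abs_indicator_comp_le_iSup_Icc hbc fun y hy => hxM y (Ioc_subset_Icc_self hy)
  have hKi : Integrable K := .of_integral_ne_zero (by rw [hKint]; exact one_ne_zero)
  have hAB : A ≤ B := nonempty_Icc.1 ((Function.support_nonempty_iff.2 fun hK => by
    simp [hK] at hKint).mono hsupp)
  have hdirect : ∫ u in (0:ℝ)..t, b (x u) = ∫ u in (0:ℝ)..t, g u :=
    integral_congr_ae (ae_of_all _ fun u hu =>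
      (indicator_of_mem (Ioc_subset_Ioc_right ht.2 (uIoc_of_le ht.1 ▸ hu))
        (fun s => b (x s))).symm)
  rw [integral_congr fun u _ =>
      intervalIntegral_rescaled_kernel_mul K _ hh (ht.1.trans ht.2) u, hdirect,
    ← integral_eq_intervalIntegral_of_support_subset_Icc hAB
      ((Function.support_mul_subset_left _ _).trans hsupp)]
  simpa only [abs_of_pos hh] using abs_integral_kernel_smoothing_sub_le hK0 hKi hKint
    (integrable_mul_abs_of_support_subset_Icc hKi hsupp) hgm hgS h t

/-- Bias bound for the term `β_ε(t)` in Theorem 3.4: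
`|∫_0^t ∫_0^T K_h(s-u) b(x(s)) ds du - ∫_0^t b(x(u)) du|
  ≤ 2h (sup_{|z|≤M} |b(z)|) ∫_A^B K(u)|u| du`. -/
theorem bias_bound (T L M A B h : ℝ) (hT : 0 < T) (hh : 0 < h) (hM : 0 ≤ M)
    (b : ℝ → ℝ)
    (hb : ∃ ℓ : ℝ, 0 ≤ ℓ ∧ (∀ z w : ℝ, |b z - b w| ≤ ℓ * |z - w|) ∧ |b 0| + ℓ ≤ L)
    (x : ℝ → ℝ) (hx : ContinuousOn x (Set.Icc 0 T))
    (hxM : ∀ s ∈ Set.Icc (0:ℝ) T, |x s| ≤ M)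
    (K : ℝ → ℝ) (hK0 : ∀ v, 0 ≤ K v) (hKbdd : ∃ C, ∀ v, K v ≤ C)
    (hKint : ∫ v : ℝ, K v = 1) (hsupp : Function.support K ⊆ Set.Icc A B) :
    ∀ t ∈ Set.Icc (0:ℝ) T,
      |(∫ u in (0:ℝ)..t, ∫ s in (0:ℝ)..T, (1 / h) * K ((s - u) / h) * b (x s))
          - ∫ u in (0:ℝ)..t, b (x u)|
        ≤ 2 * h * (⨆ z : Set.Icc (-M) M, |b z.1|) * ∫ u in A..B, K u * |u| :=
  bias_bound_general T L M A B h hh b hb x hx hxM K hK0 hKint hsupp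
end

section
/- Let y : [0,T] → ℝ be Lipschitz continuous with constant Λ, let K : ℝ → ℝ≥0 be a kernel with ∫_A^B K(u) du = 1 and support in [A,B], and let h > 0. Then for every t ∈ [0,T], |∫_0^T ∫_0^t (1/h)K((s-u)/h) du dy(s) - (y(t) - y(0))| ≤ 2·max(|A|,|B|)·Λ·h, where dy(s) = ẏ(s)ds since y is absolutely continuous. -/
/-!
After the substitution `v = (s - u) / h`, the inner integral is the weight
`w(s) = ∫_{(s-t)/h}^{s/h} K`. Exchanging the order of integration turns
`∫_0^T w ẏ` into the `K`-average of `v ↦ y(π(hv + t)) - y(π(hv))`, where `π` is the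
projection onto `[0, T]`. As `π` is 1-Lipschitz and fixes `0` and `t`, on the support of `K`
each of these differs from `y(t) - y(0)` by at most `2Λ|v|h ≤ 2 max(|A|, |B|) Λ h`.

The derivative `ẏ` is only known through `y b - y a = ∫_a^b ẏ`, so it need not be measurable.
Fubini is therefore applied on `{w ≠ 0}`, where `ẏ = (w ẏ) / w`; this loses nothing because for
almost every `v` with `K v ≠ 0` the window `(hv, hv + t)` lies inside `{w ≠ 0}`. When `w ẏ` is not
integrable, neither is `ẏ`, and then the junk value `0` of the integrals forces `y t = y 0`.
-/

open Set MeasureTheory Filter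

theorem integrable_of_support_subset_Icc {f : ℝ → ℝ} {a b : ℝ}
    (hsupp : Function.support f ⊆ Icc a b) (hf : IntervalIntegrable f volume a b) :
    Integrable f := by
  rcases le_or_gt a b with hab | hab
  · rw [← integrableOn_iff_integrable_of_support_subset hsupp,
      integrableOn_Icc_iff_integrableOn_Ioc]
    exact hf.1
  · rw [Icc_eq_empty hab.not_ge, subset_empty_iff, Function.support_eq_empty_iff] at hsupp
    exact hsupp ▸ integrable_zero _ _ _

theorem intervalIntegral_eq_integral_of_support_subset_Icc {f : ℝ → ℝ} {a b : ℝ}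
    (hsupp : Function.support f ⊆ Icc a b) : ∫ x in a..b, f x = ∫ x, f x := by
  rcases le_or_gt a b with hab | hab
  · rw [intervalIntegral.integral_of_le hab, ← integral_Icc_eq_integral_Ioc,
      setIntegral_eq_integral_of_forall_compl_eq_zero
        fun x hx => Function.notMem_support.1 fun hfx => hx (hsupp hfx)]
  · rw [Icc_eq_empty hab.not_ge, subset_empty_iff, Function.support_eq_empty_iff] at hsupp
    simp [hsupp]

theorem eq_of_not_intervalIntegrable {y yd : ℝ → ℝ}
    (hyd : ∀ a b, y b - y a = ∫ s in a..b, yd s) {a b : ℝ}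
    (hab : ¬IntervalIntegrable yd volume a b) (c : ℝ) : y c = y a := by
  by_cases hac : IntervalIntegrable yd volume a c
  · have hcb : ¬IntervalIntegrable yd volume c b := fun hcb => hab (hac.trans hcb)
    have hyab := hyd a b
    have hycb := hyd c b
    rw [intervalIntegral.integral_undef hab] at hyab
    rw [intervalIntegral.integral_undef hcb] at hycb
    linarith
  · have hyac := hyd a c
    rw [intervalIntegral.integral_undef hac] at hyac
    linarith

theorem continuous_intervalIntegral_comp {K : ℝ → ℝ} (hK : Integrable K) {a b : ℝ → ℝ}
    (ha : Continuous a) (hb : Continuous b) : Continuous fun s => ∫ v in a s..b s, K v := by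
  have hP := intervalIntegral.continuous_primitive (fun _ _ => hK.intervalIntegrable) 0
  have hsub : (fun s => ∫ v in a s..b s, K v)
      = fun s => (∫ v in (0:ℝ)..b s, K v) - ∫ v in (0:ℝ)..a s, K v := funext fun s =>
    (intervalIntegral.integral_interval_sub_left hK.intervalIntegrable
      hK.intervalIntegrable).symm
  rw [hsub]
  exact (hP.comp hb).sub (hP.comp ha)

theorem ae_imp_of_mem_iUnion_isOpen {X ι : Type*} [TopologicalSpace X]
    [SecondCountableTopology X] [MeasurableSpace X] {μ : Measure X} {U : ι → Set X}
    (hU : ∀ i, IsOpen (U i)) {p : X → Prop} (h : ∀ i, ∀ᵐ x ∂μ, x ∈ U i → p x) :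
    ∀ᵐ x ∂μ, x ∈ ⋃ i, U i → p x := by
  obtain ⟨S, hSc, hS⟩ := TopologicalSpace.isOpen_iUnion_countable U hU
  rw [← hS]
  filter_upwards [(ae_ball_iff hSc).2 fun i _ => h i] with x hx hxS
  obtain ⟨i, hi, hxi⟩ := mem_iUnion₂.1 hxS
  exact hx i hi hxi

theorem ae_eq_zero_of_mem_iUnion_Ioo {K : ℝ → ℝ} (hK0 : 0 ≤ K) (hK : Integrable K) {ι : Type*}
    {a b : ι → ℝ} (h : ∀ i, ∫ v in Ioo (a i) (b i), K v = 0) :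
    ∀ᵐ v, v ∈ ⋃ i, Ioo (a i) (b i) → K v = 0 := by
  refine ae_imp_of_mem_iUnion_isOpen (fun i => isOpen_Ioo) fun i => ?_
  have hKi := (setIntegral_eq_zero_iff_of_nonneg_ae (Eventually.of_forall hK0)
    hK.integrableOn).1 (h i)
  exact (ae_restrict_iff' measurableSet_Ioo).1 hKi

theorem abs_integral_mul_sub_le {K g : ℝ → ℝ} {c ε : ℝ} (hK0 : 0 ≤ K) (hK : Integrable K)
    (hK1 : ∫ v, K v = 1) (hg : AEStronglyMeasurable g)
    (hbound : ∀ v, K v ≠ 0 → |g v - c| ≤ ε) : |(∫ v, K v * g v) - c| ≤ ε := by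
  have hpt : ∀ v, ‖K v * (g v - c)‖ ≤ K v * ε := fun v => by
    rcases eq_or_ne (K v) 0 with hKv | hKv
    · simp [hKv]
    · rw [norm_mul, Real.norm_of_nonneg (hK0 v), Real.norm_eq_abs]
      exact mul_le_mul_of_nonneg_left (hbound v hKv) (hK0 v)
  have hKgc : Integrable fun v => K v * (g v - c) :=
    (hK.mul_const ε).mono' (hK.aestronglyMeasurable.mul (hg.sub aestronglyMeasurable_const))
      (Eventually.of_forall hpt)
  have hKg : Integrable fun v => K v * g v :=
    (hKgc.add (hK.mul_const c)).congr
      (Eventually.of_forall fun v => by simp only [Pi.add_apply]; ring)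
  have hsub : (∫ v, K v * g v) - c = ∫ v, K v * (g v - c) := by
    simp_rw [mul_sub]
    rw [integral_sub hKg (hK.mul_const c), integral_mul_const, hK1, one_mul]
  rw [hsub, ← Real.norm_eq_abs]
  calc ‖∫ v, K v * (g v - c)‖ ≤ ∫ v, K v * ε :=
        norm_integral_le_of_norm_le (hK.mul_const ε) (Eventually.of_forall hpt)
    _ = ε := by rw [integral_mul_const, hK1, one_mul]

theorem Ioc_inter_Ioc_eq_Ioc_projIcc {a b x z : ℝ} (hab : a ≤ b) :
    Ioc x z ∩ Ioc a b = Ioc (projIcc a b hab x : ℝ) (projIcc a b hab z) := by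
  ext s
  simp only [coe_projIcc, mem_inter_iff, mem_Ioc, max_lt_iff, min_lt_iff, le_max_iff,
    le_min_iff]
  constructor
  · rintro ⟨⟨hxs, hsz⟩, has, hsb⟩
    exact ⟨⟨has, Or.inr hxs⟩, Or.inr ⟨hsb, hsz⟩⟩
  · rintro ⟨⟨has, hbs | hxs⟩, hsa | ⟨hsb, hsz⟩⟩ <;> refine ⟨⟨?_, ?_⟩, ?_, ?_⟩ <;> linarith

theorem abs_sub_projIcc_le {a b : ℝ} (hab : a ≤ b) {x : ℝ} (hx : x ∈ Icc a b) (z : ℝ) :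
    |(projIcc a b hab z : ℝ) - x| ≤ |z - x| := by
  have := (LipschitzWith.projIcc hab).dist_le_mul z x
  rwa [NNReal.coe_one, one_mul, Subtype.dist_eq, projIcc_of_mem hab hx, Real.dist_eq,
    Real.dist_eq] at this

theorem abs_projIcc_increment_sub_le {y : ℝ → ℝ} {Λ T t : ℝ} (hΛ : 0 ≤ Λ)
    (hyLip : ∀ s t : ℝ, |y t - y s| ≤ Λ * |t - s|) (hT : 0 ≤ T) (ht : t ∈ Icc 0 T) (x : ℝ) :
    |y (projIcc 0 T hT (x + t)) - y (projIcc 0 T hT x) - (y t - y 0)| ≤ 2 * Λ * |x| := by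
  have hr := hyLip t (projIcc 0 T hT (x + t))
  have hl := hyLip 0 (projIcc 0 T hT x)
  have hr' : |(projIcc 0 T hT (x + t) : ℝ) - t| ≤ |x| := by
    simpa using abs_sub_projIcc_le hT ht (x + t)
  have hl' : |(projIcc 0 T hT x : ℝ) - 0| ≤ |x| := by
    simpa using abs_sub_projIcc_le hT (left_mem_Icc.2 hT) x
  calc _ = |(y (projIcc 0 T hT (x + t)) - y t) - (y (projIcc 0 T hT x) - y 0)| := by ring_nf
    _ ≤ |y (projIcc 0 T hT (x + t)) - y t| + |y (projIcc 0 T hT x) - y 0| := abs_sub _ _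
    _ ≤ Λ * |x| + Λ * |x| := add_le_add (hr.trans (by gcongr)) (hl.trans (by gcongr))
    _ = 2 * Λ * |x| := by ring

theorem setIntegral_Ioo_inter_Ioc_eq_sub {y yd : ℝ → ℝ}
    (hyd : ∀ a b : ℝ, y b - y a = ∫ s in a..b, yd s) {T : ℝ} (hT : 0 ≤ T) {x z : ℝ}
    (hxz : x ≤ z) :
    ∫ s in Ioo x z ∩ Ioc 0 T, yd s = y (projIcc 0 T hT z) - y (projIcc 0 T hT x) := by
  rw [setIntegral_congr_set
      (ae_eq_set_inter (Ioo_ae_eq_Ioc (μ := volume)) (ae_eq_refl (Ioc 0 T))),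
    Ioc_inter_Ioc_eq_Ioc_projIcc hT,
    ← intervalIntegral.integral_of_le (monotone_projIcc hT hxz), hyd]

noncomputable def kernelWeight (K : ℝ → ℝ) (h t s : ℝ) : ℝ :=
  ∫ v in Ioo ((s - t) / h) (s / h), K v

theorem mem_Ioo_sub_div_iff {h s t v : ℝ} (hh : 0 < h) :
    v ∈ Ioo ((s - t) / h) (s / h) ↔ s ∈ Ioo (v * h) (v * h + t) := by
  simp only [mem_Ioo, div_lt_iff₀ hh, lt_div_iff₀ hh]
  constructor <;> rintro ⟨h1, h2⟩ <;> constructor <;> linarith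

theorem integral_rescaled_kernel_eq (K : ℝ → ℝ) {h t : ℝ} (hh : 0 < h) (ht : 0 ≤ t) (s : ℝ) :
    ∫ u in (0:ℝ)..t, 1 / h * K ((s - u) / h) = kernelWeight K h t s := by
  rw [intervalIntegral.integral_const_mul,
    intervalIntegral.integral_comp_sub_left (fun x => K (x / h)) s, sub_zero,
    intervalIntegral.integral_comp_div _ hh.ne', smul_eq_mul, ← mul_assoc,
    one_div_mul_cancel hh.ne', one_mul, intervalIntegral.integral_of_le (by gcongr; linarith),
    integral_Ioc_eq_integral_Ioo, kernelWeight]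

theorem continuous_kernelWeight {K : ℝ → ℝ} (hK : Integrable K) {h t : ℝ} (hh : 0 < h)
    (ht : 0 ≤ t) : Continuous (kernelWeight K h t) := by
  have hw : ∀ s, ∫ v in (s - t) / h..s / h, K v = kernelWeight K h t s := fun s => by
    rw [intervalIntegral.integral_of_le (by gcongr; linarith), integral_Ioc_eq_integral_Ioo,
      kernelWeight]
  simpa only [hw] using continuous_intervalIntegral_comp hK
    (a := fun s => (s - t) / h) (b := fun s => s / h) (by fun_prop) (by fun_prop)

theorem ae_Ioo_subset_kernelWeight_ne_zero {K : ℝ → ℝ} (hK0 : 0 ≤ K) (hK : Integrable K)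
    {h t : ℝ} (hh : 0 < h) :
    ∀ᵐ v, K v ≠ 0 → Ioo (v * h) (v * h + t) ⊆ {s | kernelWeight K h t s ≠ 0} := by
  filter_upwards [ae_eq_zero_of_mem_iUnion_Ioo hK0 hK (ι := {s // kernelWeight K h t s = 0})
    (a := fun s => (s.1 - t) / h) (b := fun s => s.1 / h) fun s => s.2] with v hv hKv s hs hws
  exact hKv (hv (mem_iUnion.2 ⟨⟨s, hws⟩, (mem_Ioo_sub_div_iff hh).2 hs⟩))

theorem integral_kernelWeight_mul_swap {μ : Measure ℝ} [SFinite μ] {K f : ℝ → ℝ} {h t : ℝ}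
    (hh : 0 < h) (hK0 : 0 ≤ K) (hK : Integrable K) (hf : AEStronglyMeasurable f μ)
    (hKf : Integrable (fun s => kernelWeight K h t s * f s) μ) :
    ∫ s, kernelWeight K h t s * f s ∂μ
      = ∫ v, K v * ∫ s in Ioo (v * h) (v * h + t), f s ∂μ := by
  set S : Set (ℝ × ℝ) := {p | (p.1 - t) / h < p.2} ∩ {p | p.2 < p.1 / h}
  have hS : MeasurableSet S :=
    ((isOpen_lt (by fun_prop) (by fun_prop)).inter
      (isOpen_lt (by fun_prop) (by fun_prop))).measurableSet
  set F : ℝ → ℝ → ℝ := fun s v => S.indicator (fun p => K p.2 * f p.1) (s, v)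
  have hF_left : ∀ s v, F s v = (Ioo ((s - t) / h) (s / h)).indicator K v * f s := by
    intro s v
    simp only [F]
    by_cases hv : v ∈ Ioo ((s - t) / h) (s / h)
    · rw [indicator_of_mem hv, indicator_of_mem (show (s, v) ∈ S from hv)]
    · rw [indicator_of_notMem hv, indicator_of_notMem (show (s, v) ∉ S from hv), zero_mul]
  have hF_right : ∀ s v, F s v = K v * (Ioo (v * h) (v * h + t)).indicator f s := by
    intro s v
    rw [hF_left]
    by_cases hv : v ∈ Ioo ((s - t) / h) (s / h)
    · rw [indicator_of_mem hv, indicator_of_mem ((mem_Ioo_sub_div_iff hh).1 hv)]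
    · rw [indicator_of_notMem hv, indicator_of_notMem (mt (mem_Ioo_sub_div_iff hh).2 hv),
        zero_mul, mul_zero]
  have hF_slice : ∀ s, ∫ v, F s v = kernelWeight K h t s * f s := by
    intro s
    simp_rw [hF_left, integral_mul_const, integral_indicator measurableSet_Ioo, kernelWeight]
  have hFi : Integrable (Function.uncurry F) (μ.prod volume) := by
    have hFm : AEStronglyMeasurable (Function.uncurry F) (μ.prod volume) :=
      (hK.aestronglyMeasurable.comp_snd.mul hf.comp_fst).indicator hS
    refine (integrable_prod_iff hFm).2 ⟨Eventually.of_forall fun s => ?_, ?_⟩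
    · simp_rw [Function.uncurry_apply_pair, hF_left]
      exact (hK.indicator measurableSet_Ioo).mul_const _
    · refine hKf.norm.congr (Eventually.of_forall fun s => ?_)
      simp_rw [kernelWeight, Function.uncurry_apply_pair, hF_left, norm_mul, integral_mul_const,
        Real.norm_of_nonneg (indicator_nonneg (fun v _ => hK0 v) _),
        integral_indicator measurableSet_Ioo,
        Real.norm_of_nonneg (setIntegral_nonneg measurableSet_Ioo fun v _ => hK0 v)]
  calc ∫ s, kernelWeight K h t s * f s ∂μ
      = ∫ s, (∫ v, F s v) ∂μ := by simp_rw [hF_slice]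
    _ = ∫ v, (∫ s, F s v ∂μ) := integral_integral_swap hFi
    _ = ∫ v, K v * ∫ s in Ioo (v * h) (v * h + t), f s ∂μ := by
      simp_rw [hF_right, integral_const_mul, integral_indicator measurableSet_Ioo]

theorem integral_kernelWeight_mul_eq {T h t : ℝ} (hT : 0 ≤ T) (hh : 0 < h) (ht : 0 ≤ t)
    {y yd K : ℝ → ℝ} (hyd : ∀ a b : ℝ, y b - y a = ∫ s in a..b, yd s) (hK0 : 0 ≤ K)
    (hK : Integrable K)
    (hwy : IntervalIntegrable (fun s => kernelWeight K h t s * yd s) volume 0 T) :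
    ∫ s in (0:ℝ)..T, kernelWeight K h t s * yd s
      = ∫ v, K v * (y (projIcc 0 T hT (v * h + t)) - y (projIcc 0 T hT (v * h))) := by
  have hwc := continuous_kernelWeight hK hh ht
  set U := Ioc 0 T ∩ {s | kernelWeight K h t s ≠ 0}
  have hU : MeasurableSet U :=
    measurableSet_Ioc.inter (hwc.measurable (measurableSet_singleton 0).compl)
  have hwyU : IntegrableOn (fun s => kernelWeight K h t s * yd s) U :=
    hwy.1.mono_set inter_subset_left
  have hydU : AEStronglyMeasurable yd (volume.restrict U) :=
    (hwyU.aestronglyMeasurable.div₀ hwc.aestronglyMeasurable).congr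
      ((ae_restrict_iff' hU).2 (Eventually.of_forall fun s hs => mul_div_cancel_left₀ _ hs.2))
  have hinner : ∀ᵐ v, K v * ∫ s in Ioo (v * h) (v * h + t), yd s ∂(volume.restrict U)
      = K v * (y (projIcc 0 T hT (v * h + t)) - y (projIcc 0 T hT (v * h))) := by
    filter_upwards [ae_Ioo_subset_kernelWeight_ne_zero hK0 hK hh (t := t)] with v hv
    rcases eq_or_ne (K v) 0 with hKv | hKv
    · simp [hKv]
    have hsub : Ioo (v * h) (v * h + t) ∩ U = Ioo (v * h) (v * h + t) ∩ Ioc 0 T := by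
      simp only [U]
      rw [inter_comm (Ioc 0 T), ← inter_assoc, inter_eq_left.2 (hv hKv)]
    rw [Measure.restrict_restrict measurableSet_Ioo, hsub,
      setIntegral_Ioo_inter_Ioc_eq_sub hyd hT (by linarith)]
  calc ∫ s in (0:ℝ)..T, kernelWeight K h t s * yd s
      = ∫ s in U, kernelWeight K h t s * yd s := by
        rw [intervalIntegral.integral_of_le hT,
          setIntegral_eq_of_subset_of_forall_sdiff_eq_zero (s := U) measurableSet_Ioc
            inter_subset_left fun s ⟨hs, hsU⟩ => by
              rw [show kernelWeight K h t s = 0 from not_not.1 fun hws => hsU ⟨hs, hws⟩,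
                zero_mul]]
    _ = ∫ v, K v * ∫ s in Ioo (v * h) (v * h + t), yd s ∂(volume.restrict U) :=
        integral_kernelWeight_mul_swap hh hK0 hK hydU hwyU
    _ = _ := integral_congr_ae hinner

/-- Bound on the term `η_ε(t)` in Theorem 3.4: for `y` Lipschitz with constant `Λ`
(absolutely continuous with derivative `yd`),
`|∫_0^T (∫_0^t K_h(s-u) du) ẏ(s) ds - (y(t) - y(0))| ≤ 2 max(|A|,|B|) Λ h`. -/
theorem eta_bound (T Λ A B h : ℝ) (hT : 0 < T) (hh : 0 < h) (hΛ : 0 ≤ Λ)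
    (y yd : ℝ → ℝ)
    (hyLip : ∀ s t : ℝ, |y t - y s| ≤ Λ * |t - s|)
    (hyd : ∀ a b : ℝ, y b - y a = ∫ s in a..b, yd s)
    (K : ℝ → ℝ) (hK0 : ∀ v, 0 ≤ K v)
    (hKint : ∫ v in A..B, K v = 1) (hsupp : Function.support K ⊆ Set.Icc A B) :
    ∀ t ∈ Set.Icc (0:ℝ) T,
      |(∫ s in (0:ℝ)..T, (∫ u in (0:ℝ)..t, (1 / h) * K ((s - u) / h)) * yd s)
          - (y t - y 0)|
        ≤ 2 * max |A| |B| * Λ * h := by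
  intro t ht
  have hK : Integrable K := integrable_of_support_subset_Icc hsupp
    (intervalIntegral.intervalIntegrable_of_integral_ne_zero (by simp [hKint]))
  have hK1 : ∫ v, K v = 1 :=
    (intervalIntegral_eq_integral_of_support_subset_Icc hsupp).symm.trans hKint
  simp_rw [integral_rescaled_kernel_eq K hh ht.1]
  by_cases hwy : IntervalIntegrable (fun s => kernelWeight K h t s * yd s) volume 0 T
  · have hyc : Continuous y :=
      (LipschitzWith.of_dist_le' (K := Λ) fun a b => by
        simpa only [Real.dist_eq] using hyLip b a).continuous
    rw [integral_kernelWeight_mul_eq hT.le hh ht.1 hyd hK0 hK hwy]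
    refine abs_integral_mul_sub_le hK0 hK hK1 (by fun_prop) fun v hv => ?_
    refine (abs_projIcc_increment_sub_le hΛ hyLip hT.le ht (v * h)).trans ?_
    have hvM : |v| ≤ max |A| |B| := abs_le_max_abs_abs (hsupp hv).1 (hsupp hv).2
    rw [abs_mul, abs_of_pos hh]
    nlinarith [mul_nonneg hΛ hh.le]
  · have hydT : ¬IntervalIntegrable yd volume 0 T := fun hyd' =>
      hwy (hyd'.continuousOn_mul (continuous_kernelWeight hK hh ht.1).continuousOn)
    rw [intervalIntegral.integral_undef hwy, eq_of_not_intervalIntegrable hyd hydT t, sub_self,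
      sub_zero, abs_zero]
    positivity
end

section
/- Let K : ℝ → ℝ≥0 be a bounded kernel with support in [A,B], ∫_A^B K = 1 and A ≥ 0, let g : [0,T] → ℝ be continuous, t ∈ [0,T), and h_ε = ε^{1/(2-H)} for H ∈ (1/2,1). Define β_ε(t) := ∫_0^t ∫_0^T (1/h_ε)K((s-u)/h_ε) g(s) ds du - ∫_0^t g(u) du. Then ε^{-1/(2-H)}·β_ε(t) → (g(t) - g(0))·∫_A^B K(u)u du as ε → 0⁺. -/
open Set MeasureTheory Filter Topology intervalIntegral
open scoped NNReal

/-!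
Substituting `s = u + h v` and exchanging the order of integration writes `β_h(t) / h` as
`∫_A^B K(v) [(Φ(t + h v) - Φ(t)) / h - (Φ(h v) - Φ(0)) / h] dv`, where `Φ` is a primitive of `g`
(extended continuously beyond `[0, T]`); this needs `h B ≤ T - t` so that the rescaled kernel
stays inside `[0, T]`. Since `Φ` is Lipschitz, the difference quotients are dominated by
`|K(v)| ‖g‖_∞ |v|`, and they converge to `v g(t)` and `v g(0)`, so dominated convergence gives
the limit `(g(t) - g(0)) ∫ K(v) v dv`.
-/

theorem intervalIntegral_eq_integral_of_support_subset_Icc_s12 {E : Type*} [NormedAddCommGroup E]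
    [NormedSpace ℝ E] {μ : Measure ℝ} [NullSingletonClass μ] {f : ℝ → E} {a b : ℝ} (hab : a ≤ b)
    (hf : Function.support f ⊆ Icc a b) : ∫ x in a..b, f x ∂μ = ∫ x, f x ∂μ := by
  rw [integral_of_le hab, ← integral_Icc_eq_integral_Ioc,
    setIntegral_eq_integral_of_forall_compl_eq_zero]
  exact fun x hx => Function.notMem_support.1 fun h => hx (hf h)

theorem intervalIntegral_eq_of_support_subset_Icc {E : Type*} [NormedAddCommGroup E]
    [NormedSpace ℝ E] {μ : Measure ℝ} [NullSingletonClass μ] {f : ℝ → E} {a b c d : ℝ} (hac : a ≤ c)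
    (hcd : c ≤ d) (hdb : d ≤ b) (hf : Function.support f ⊆ Icc c d) :
    ∫ x in a..b, f x ∂μ = ∫ x in c..d, f x ∂μ := by
  rw [intervalIntegral_eq_integral_of_support_subset_Icc_s12 (hac.trans (hcd.trans hdb))
    (hf.trans (Icc_subset_Icc hac hdb)), intervalIntegral_eq_integral_of_support_subset_Icc_s12 hcd hf]

theorem integral_rescaled_kernel_mul_s12 {K f : ℝ → ℝ} {A B a b u h : ℝ}
    (hsupp : Function.support K ⊆ Icc A B) (hAB : A ≤ B) (hh : 0 < h) (ha : a ≤ u + h * A)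
    (hb : u + h * B ≤ b) :
    ∫ s in a..b, 1 / h * K ((s - u) / h) * f s = ∫ v in A..B, K v * f (u + h * v) := by
  have hsupp' :
      Function.support (fun s => K ((s - u) / h) * f s) ⊆ Icc (h * A + u) (h * B + u) := by
    intro s hs
    have hK := hsupp (left_ne_zero_of_mul hs)
    rw [mem_Icc, le_div_iff₀ hh, div_le_iff₀ hh] at hK
    constructor <;> linarith
  calc ∫ s in a..b, 1 / h * K ((s - u) / h) * f s
      = h⁻¹ * ∫ s in a..b, K ((s - u) / h) * f s := by
        simp_rw [mul_assoc, one_div]; exact integral_const_mul _ _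
    _ = h⁻¹ * ∫ s in h * A + u..h * B + u, K ((s - u) / h) * f s := by
        rw [intervalIntegral_eq_of_support_subset_Icc (by linarith) (by nlinarith) (by linarith)
          hsupp']
    _ = ∫ v in A..B, K v * f (u + h * v) := by
        rw [← smul_eq_mul, ← integral_comp_mul_add _ hh.ne']
        refine integral_congr fun v _ => ?_
        simp only [add_sub_cancel_right, mul_div_cancel_left₀ _ hh.ne', add_comm u]

theorem lipschitzWith_primitive {E : Type*} [NormedAddCommGroup E] [NormedSpace ℝ E]
    {G : ℝ → E} {M : ℝ≥0} (hG : Continuous G) (hM : ∀ x, ‖G x‖ ≤ M) (a : ℝ) :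
    LipschitzWith M fun x => ∫ s in a..x, G s := by
  refine LipschitzWith.of_dist_le_mul fun x y => ?_
  rw [dist_eq_norm, integral_interval_sub_left (hG.intervalIntegrable _ _)
    (hG.intervalIntegrable _ _), Real.dist_eq]
  exact norm_integral_le_of_norm_le_const fun s _ => hM s

theorem tendsto_rpow_nhdsGT_zero {p : ℝ} (hp : 0 < p) :
    Tendsto (fun x : ℝ => x ^ p) (𝓝[>] 0) (𝓝[>] 0) := by
  refine tendsto_nhdsWithin_of_tendsto_nhds_of_eventually_within _ ?_ ?_
  · simpa [Real.zero_rpow hp.ne'] using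
      (Real.continuousAt_rpow_const 0 p (Or.inr hp.le)).tendsto.mono_left nhdsWithin_le_nhds
  · filter_upwards [self_mem_nhdsWithin] with x (hx : 0 < x) using Real.rpow_pos_of_pos hx p

noncomputable def slopeAverage (K f : ℝ → ℝ) (A B x h : ℝ) : ℝ :=
  ∫ v in A..B, K v * (h⁻¹ * (f (x + h * v) - f x))

theorem norm_slope_le_of_lipschitzWith {f : ℝ → ℝ} {L : ℝ≥0} (hf : LipschitzWith L f)
    (x h v : ℝ) : ‖h⁻¹ * (f (x + h * v) - f x)‖ ≤ L * |v| := by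
  rcases eq_or_ne h 0 with rfl | hh
  · simp only [inv_zero, zero_mul, norm_zero]; positivity
  calc ‖h⁻¹ * (f (x + h * v) - f x)‖ = |h|⁻¹ * dist (f (x + h * v)) (f x) := by
        rw [norm_mul, norm_inv, Real.norm_eq_abs, Real.dist_eq]; rfl
    _ ≤ |h|⁻¹ * (L * |h * v|) := by
        gcongr
        simpa [Real.dist_eq] using hf.dist_le_mul (x + h * v) x
    _ = L * |v| := by rw [abs_mul]; field_simp

theorem tendsto_slopeAverage {K f : ℝ → ℝ} {A B x f' : ℝ} {L : ℝ≥0}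
    (hK : IntervalIntegrable K volume A B) (hf : LipschitzWith L f) (hfx : HasDerivAt f f' x) :
    Tendsto (slopeAverage K f A B x) (𝓝[≠] 0) (𝓝 (f' * ∫ v in A..B, K v * v)) := by
  have hlim (v : ℝ) : Tendsto (fun h => h⁻¹ * (f (x + h * v) - f x)) (𝓝[≠] 0) (𝓝 (f' * v)) := by
    have hline : HasDerivAt (fun h => x + h * v) v 0 := by
      simpa using ((hasDerivAt_id (0 : ℝ)).mul_const v).const_add x
    have hd : HasDerivAt (fun h => f (x + h * v)) (f' * v) 0 := by
      apply HasDerivAt.comp (0 : ℝ) _ hline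
      simpa using hfx
    simpa using hd.tendsto_slope_zero
  have hcont (h : ℝ) : Continuous fun v => h⁻¹ * (f (x + h * v) - f x) := by
    have := hf.continuous; fun_prop
  rw [← intervalIntegral.integral_const_mul]
  unfold slopeAverage
  convert tendsto_integral_filter_of_dominated_convergence (fun v => ‖K v‖ * (L * |v|))
    (.of_forall fun h => (hK.mul_continuousOn (hcont h).continuousOn).def'.aestronglyMeasurable)
    (.of_forall fun h => ae_of_all _ fun v _ => by
      rw [norm_mul]; exact mul_le_mul_of_nonneg_left (norm_slope_le_of_lipschitzWith hf x h v)
        (norm_nonneg _))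
    (hK.norm.mul_continuousOn (by fun_prop)) (ae_of_all _ fun v _ => (hlim v).const_mul (K v))
    using 2
  exact integral_congr fun v _ => by ring

/-- The paper's `β_ε(t)`, written in terms of the bandwidth `h = ε^{1/(2-H)}`. -/
noncomputable def kernelBias (K g : ℝ → ℝ) (T t h : ℝ) : ℝ :=
  (∫ u in (0 : ℝ)..t, ∫ s in (0 : ℝ)..T, 1 / h * K ((s - u) / h) * g s) - ∫ u in (0 : ℝ)..t, g u

theorem inv_mul_kernelBias_eq {K G : ℝ → ℝ} {A B T t h M : ℝ}
    (hK : IntervalIntegrable K volume A B) (hsupp : Function.support K ⊆ Icc A B)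
    (hKint : ∫ v in A..B, K v = 1) (hA : 0 ≤ A) (hAB : A ≤ B) (hG : Continuous G)
    (hM : ∀ x, ‖G x‖ ≤ M) (ht : 0 ≤ t) (hh : 0 < h) (htT : t + h * B ≤ T) :
    h⁻¹ * kernelBias K G T t h = slopeAverage K (fun x => ∫ s in (0 : ℝ)..x, G s) A B t h
      - slopeAverage K (fun x => ∫ s in (0 : ℝ)..x, G s) A B 0 h := by
  set Φ := fun x => ∫ s in (0 : ℝ)..x, G s with hΦ
  have hΦc : Continuous Φ := continuous_primitive (fun _ _ => hG.intervalIntegrable _ _) 0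
  have inner : ∀ u ∈ uIcc 0 t,
      ∫ s in (0 : ℝ)..T, 1 / h * K ((s - u) / h) * G s = ∫ v in A..B, K v * G (u + h * v) := by
    intro u hu
    rw [uIcc_of_le ht] at hu
    exact integral_rescaled_kernel_mul_s12 hsupp hAB hh (by nlinarith [hu.1]) (by nlinarith [hu.2])
  have hprod : IntegrableOn (Function.uncurry fun u v => K v * G (u + h * v))
      (uIoc 0 t ×ˢ uIoc A B) := by
    rw [uIoc_of_le ht, IntegrableOn, Measure.volume_eq_prod, ← Measure.prod_restrict]
    exact (hK.def'.comp_snd _).mul_bdd (by fun_prop) (ae_of_all _ fun z => hM _)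
  have shift (v : ℝ) :
      ∫ u in (0 : ℝ)..t, K v * G (u + h * v) = K v * (Φ (t + h * v) - Φ (0 + h * v)) := by
    rw [intervalIntegral.integral_const_mul, integral_comp_add_right,
      integral_interval_sub_left (hG.intervalIntegrable _ _) (hG.intervalIntegrable _ _)]
  have hslope (x : ℝ) :
      IntervalIntegrable (fun v => K v * (h⁻¹ * (Φ (x + h * v) - Φ x))) volume A B :=
    hK.mul_continuousOn (by fun_prop)
  have hconst : ∫ u in (0 : ℝ)..t, G u = ∫ v in A..B, K v * Φ t := by
    rw [intervalIntegral.integral_mul_const, hKint, one_mul]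
  unfold kernelBias slopeAverage
  rw [integral_congr inner, intervalIntegral_intervalIntegral_swap hprod,
    integral_congr fun v _ => shift v, hconst, ← integral_sub (hslope t) (hslope 0),
    ← integral_sub (hK.mul_continuousOn (by fun_prop)) (hK.mul_continuousOn continuousOn_const),
    ← intervalIntegral.integral_const_mul]
  refine integral_congr fun v _ => ?_
  simp only [hΦ, integral_same, zero_add]
  ring

theorem tendsto_inv_mul_kernelBias {K G : ℝ → ℝ} {A B T t : ℝ} {M : ℝ≥0}
    (hK : IntervalIntegrable K volume A B) (hsupp : Function.support K ⊆ Icc A B)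
    (hKint : ∫ v in A..B, K v = 1) (hA : 0 ≤ A) (hAB : A ≤ B) (hG : Continuous G)
    (hM : ∀ x, ‖G x‖ ≤ M) (ht : 0 ≤ t) (htT : t < T) :
    Tendsto (fun h => h⁻¹ * kernelBias K G T t h) (𝓝[>] 0)
      (𝓝 ((G t - G 0) * ∫ v in A..B, K v * v)) := by
  have hΦ := lipschitzWith_primitive hG hM 0
  have hderiv (x : ℝ) : HasDerivAt (fun y => ∫ s in (0 : ℝ)..y, G s) (G x) x :=
    (hG.integral_hasStrictDerivAt 0 x).hasDerivAt
  have hlim := ((tendsto_slopeAverage hK hΦ (hderiv t)).sub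
    (tendsto_slopeAverage hK hΦ (hderiv 0))).mono_left (nhdsGT_le_nhdsNE 0)
  rw [← sub_mul] at hlim
  have hsmall : ∀ᶠ h in 𝓝 (0 : ℝ), t + h * B < T :=
    Tendsto.eventually_lt_const htT (Continuous.tendsto' (by fun_prop) 0 t (by simp))
  refine hlim.congr' ?_
  filter_upwards [self_mem_nhdsWithin, nhdsWithin_le_nhds hsmall] with h (hh : 0 < h) hhT
  exact (inv_mul_kernelBias_eq hK hsupp hKint hA hAB hG hM ht hh hhT.le).symm

theorem kernelBias_congr {K g G : ℝ → ℝ} {T t h : ℝ} (ht : t ∈ Icc 0 T)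
    (hgG : EqOn g G (Icc 0 T)) : kernelBias K g T t h = kernelBias K G T t h := by
  have htT : uIcc 0 t ⊆ Icc 0 T := by rw [uIcc_of_le ht.1]; exact Icc_subset_Icc_right ht.2
  unfold kernelBias
  congr 1
  · refine integral_congr fun u _ => integral_congr fun s hs => ?_
    rw [uIcc_of_le (ht.1.trans ht.2)] at hs
    simp only [hgG hs]
  · exact integral_congr fun u hu => hgG (htT hu)

theorem beta_asymptotics_general (T H A B : ℝ) (hT : 0 < T) (hH : H ∈ Set.Ioo (1/2 : ℝ) 1)
    (hA : 0 ≤ A) (hAB : A < B)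
    (K : ℝ → ℝ)
    (hsupp : Function.support K ⊆ Set.Icc A B) (hKint : ∫ v in A..B, K v = 1)
    (g : ℝ → ℝ) (hg : ContinuousOn g (Set.Icc 0 T)) (t : ℝ) (ht : t ∈ Set.Ico (0:ℝ) T) :
    Tendsto (fun ε : ℝ =>
        ε ^ (-(1 / (2 - H))) *
          ((∫ u in (0:ℝ)..t, ∫ s in (0:ℝ)..T,
              (1 / ε ^ (1 / (2 - H))) * K ((s - u) / ε ^ (1 / (2 - H))) * g s)
            - ∫ u in (0:ℝ)..t, g u))
      (𝓝[>] (0:ℝ)) (𝓝 ((g t - g 0) * ∫ u in A..B, K u * u)) := by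
  have hp : 0 < 1 / (2 - H) := one_div_pos.2 (by linarith [hH.2])
  set G := fun x => g (projIcc 0 T hT.le x)
  have hgG : EqOn g G (Icc 0 T) := fun x hx => by simp [G, projIcc_of_mem hT.le hx]
  have hGc : Continuous G :=
    hg.comp_continuous (continuous_subtype_val.comp continuous_projIcc) fun x => (projIcc 0 T _ x).2
  obtain ⟨M, hM⟩ := isCompact_Icc.exists_bound_of_continuousOn hg
  have hK : IntervalIntegrable K volume A B := by
    by_contra h
    simp [integral_undef h] at hKint
  have hlim := (tendsto_inv_mul_kernelBias hK hsupp hKint hA hAB.le hGc (M := M.toNNReal)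
    (fun x => (hM _ (projIcc 0 T _ x).2).trans (Real.le_coe_toNNReal M)) ht.1 ht.2).comp
    (tendsto_rpow_nhdsGT_zero hp)
  rw [← hgG ⟨ht.1, ht.2.le⟩, ← hgG ⟨le_rfl, hT.le⟩] at hlim
  refine hlim.congr' ?_
  filter_upwards [self_mem_nhdsWithin] with ε (hε : 0 < ε)
  rw [Function.comp_apply, ← Real.rpow_neg hε.le, ← kernelBias_congr ⟨ht.1, ht.2.le⟩ hgG]
  rfl

/-- Asymptotic bias computation of Proposition 3.8: with `h_ε = ε^{1/(2-H)}` and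
`β_ε(t) = ∫_0^t ∫_0^T K_{h_ε}(s-u) g(s) ds du - ∫_0^t g(u) du`,
`ε^{-1/(2-H)} β_ε(t) → (g(t) - g(0)) ∫_A^B K(u) u du` as `ε → 0⁺`. -/
theorem beta_asymptotics (T H A B : ℝ) (hT : 0 < T) (hH : H ∈ Set.Ioo (1/2 : ℝ) 1)
    (hA : 0 ≤ A) (hAB : A < B)
    (K : ℝ → ℝ) (hK0 : ∀ v, 0 ≤ K v) (hKbdd : ∃ C, ∀ v, K v ≤ C)
    (hsupp : Function.support K ⊆ Set.Icc A B) (hKint : ∫ v in A..B, K v = 1)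
    (g : ℝ → ℝ) (hg : ContinuousOn g (Set.Icc 0 T)) (t : ℝ) (ht : t ∈ Set.Ico (0:ℝ) T) :
    Tendsto (fun ε : ℝ =>
        ε ^ (-(1 / (2 - H))) *
          ((∫ u in (0:ℝ)..t, ∫ s in (0:ℝ)..T,
              (1 / ε ^ (1 / (2 - H))) * K ((s - u) / ε ^ (1 / (2 - H))) * g s)
            - ∫ u in (0:ℝ)..t, g u))
      (𝓝[>] (0:ℝ)) (𝓝 ((g t - g 0) * ∫ u in A..B, K u * u)) :=
  beta_asymptotics_general T H A B hT hH hA hAB K hsupp hKint g hg t ht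
end

section
/- Let y : [0,T] → ℝ be Lipschitz, let t ∈ [0,T) be a point at which the a.e. derivative ẏ admits a version continuous on a neighborhood of both 0 and t, let K : ℝ → ℝ≥0 be bounded with support in [A,B], A ≥ 0 and ∫K = 1, and h_ε = ε^{1/(2-H)}, H ∈ (1/2,1). Define η_ε(t) := ∫_0^T ∫_0^t (1/h_ε)K((s-u)/h_ε) du ẏ(s) ds - (y(t) - y(0)). Then ε^{-1/(2-H)}·η_ε(t) → (ẏ(t) - ẏ(0))·∫_A^B K(u)u du as ε → 0⁺. -/
/-!
Write `G x = ∫_x^B K` for the tail of `K`. Substituting `v = (s - u) / h`, the inner integral is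
`G ((s - t) / h) - G (s / h)`. As `G = 1` on `(-∞, 0]` and `G = 0` on `[B, ∞)`, subtracting
`∫_0^t ẏ` leaves two boundary layers of width `h B`, at `0` and at `t`, and rescaling them gives
`η = h ∫_0^B G x (ẏ (t + h x) - ẏ (h x)) dx`. Dominated convergence, with continuity of `ẏ` at
`0` and `t`, and `∫_0^B G = ∫_A^B K u u du` (integration by parts) give the limit.

If `ẏ` is not integrable on `[0, t]`, Lean's integrals of it, and hence `η`, are `0`; but then
every increment of `y` between a point near `0` and a point near `t` vanishes, so `y` is constant
near `0` and near `t`, and continuity of `ẏ` there forces `ẏ 0 = ẏ t = 0`.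
-/

open Set MeasureTheory Filter Topology

namespace EtaAsymptotics

lemma intervalIntegral_eq_zero_of_forall_mem_Ioo {f : ℝ → ℝ} {a b : ℝ} (hab : a ≤ b)
    (hf : ∀ x ∈ Ioo a b, f x = 0) : ∫ x in a..b, f x = 0 := by
  rw [intervalIntegral.integral_of_le hab, integral_Ioc_eq_integral_Ioo]
  exact setIntegral_eq_zero_of_forall_eq_zero hf

lemma intervalIntegral_eq_of_forall_mem_Ioc_eq_zero {f : ℝ → ℝ} {c m d : ℝ} (hcm : c ≤ m)
    (hmd : m ≤ d) (hf : ∀ s ∈ Ioc m d, f s = 0) :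
    ∫ s in c..d, f s = ∫ s in c..m, f s := by
  rw [intervalIntegral.integral_of_le (hcm.trans hmd), intervalIntegral.integral_of_le hcm]
  refine setIntegral_eq_of_subset_of_forall_sdiff_eq_zero measurableSet_Ioc
    (Ioc_subset_Ioc_right hmd) fun s hs => hf s ⟨?_, hs.1.2⟩
  by_contra! h
  exact hs.2 ⟨hs.1.1, h⟩

lemma intervalIntegral_comp_div_sub_mul {φ g : ℝ → ℝ} {c d h B : ℝ} (hh : 0 < h)
    (hB : 0 ≤ B) (hd : c + h * B ≤ d) (hφ : ∀ x, B ≤ x → φ x = 0) :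
    ∫ s in c..d, φ ((s - c) / h) * g s = h * ∫ x in (0:ℝ)..B, φ x * g (c + h * x) := by
  have hcut : ∫ s in c..d, φ ((s - c) / h) * g s
      = ∫ s in c..c + h * B, φ ((s - c) / h) * g s :=
    intervalIntegral_eq_of_forall_mem_Ioc_eq_zero (by nlinarith) hd fun s hs => by
      rw [hφ _ ((le_div_iff₀ hh).2 (by linarith [hs.1])), zero_mul]
  have hsub := intervalIntegral.smul_integral_comp_add_mul (a := 0) (b := B)
    (fun s => φ ((s - c) / h) * g s) h c
  simp only [mul_zero, add_zero, add_sub_cancel_left, mul_div_cancel_left₀ _ hh.ne',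
    smul_eq_mul] at hsub
  rw [hcut, hsub]

lemma intervalIntegrable_comp_div_sub_mul {φ g : ℝ → ℝ} {c d h B r : ℝ} (hh : 0 < h)
    (hcd : c ≤ d) (hhB : h * B ≤ r) (hφc : Continuous φ) (hφ : ∀ x, B ≤ x → φ x = 0)
    (hg : ContinuousOn g (Icc c (c + r))) :
    IntervalIntegrable (fun s => φ ((s - c) / h) * g s) volume c d := by
  rw [intervalIntegrable_iff_integrableOn_Ioc_of_le hcd]
  have hon : IntegrableOn (fun s => φ ((s - c) / h) * g s) (Icc c (c + r)) :=
    ((hφc.comp (by fun_prop)).continuousOn.mul hg).integrableOn_compact isCompact_Icc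
  refine hon.of_forall_sdiff_eq_zero measurableSet_Ioc fun s hs => ?_
  have hsr : c + r < s := by
    by_contra! h'
    exact hs.2 ⟨hs.1.1.le, h'⟩
  rw [hφ _ ((le_div_iff₀ hh).2 (by linarith)), zero_mul]

section Kernel

variable {K : ℝ → ℝ} {A B : ℝ}

lemma integrable_of_intervalIntegrable_of_support_subset
    (hK : IntervalIntegrable K volume A B) (hsupp : Function.support K ⊆ Icc A B) :
    Integrable K :=
  (integrableOn_iff_integrable_of_support_subset hsupp).1
    ((integrableOn_Icc_iff_integrableOn_Ioc (f := K)).2 hK.1)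

lemma tail_eq_one_of_le_left (hKi : Integrable K) (hsupp : Function.support K ⊆ Icc A B)
    (hKint : ∫ v in A..B, K v = 1) {x : ℝ} (hx : x ≤ A) : ∫ v in x..B, K v = 1 := by
  rw [← intervalIntegral.integral_add_adjacent_intervals (b := A) hKi.intervalIntegrable
    hKi.intervalIntegrable, hKint, intervalIntegral_eq_zero_of_forall_mem_Ioo hx
      fun v hv => Function.support_subset_iff'.1 hsupp _ fun h => hv.2.not_ge h.1, zero_add]

lemma tail_eq_zero_of_right_le (hsupp : Function.support K ⊆ Icc A B) {x : ℝ} (hx : B ≤ x) :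
    ∫ v in x..B, K v = 0 := by
  rw [intervalIntegral.integral_symm, intervalIntegral_eq_zero_of_forall_mem_Ioo hx
    fun v hv => Function.support_subset_iff'.1 hsupp _ fun h => hv.1.not_ge h.2, neg_zero]

lemma tail_eq_neg_primitive :
    (fun x => ∫ v in x..B, K v) = fun x => -∫ v in B..x, K v :=
  funext fun _ => intervalIntegral.integral_symm _ _

lemma continuous_tail (hKi : Integrable K) : Continuous fun x => ∫ v in x..B, K v := by
  rw [tail_eq_neg_primitive]
  exact (hKi.continuous_primitive B).neg

lemma intervalIntegral_rescaled_kernel (hKi : Integrable K) {h : ℝ} (hh : 0 < h) (t s : ℝ) :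
    ∫ u in (0:ℝ)..t, 1 / h * K ((s - u) / h)
      = (∫ v in (s - t) / h..B, K v) - ∫ v in s / h..B, K v := by
  rw [intervalIntegral.integral_const_mul,
    intervalIntegral.integral_comp_sub_left (fun x => K (x / h)) s,
    intervalIntegral.integral_comp_div K hh.ne', sub_zero, smul_eq_mul, ← mul_assoc,
    one_div_mul_cancel hh.ne', one_mul,
    ← intervalIntegral.integral_add_adjacent_intervals (b := s / h) (c := B)
      hKi.intervalIntegrable hKi.intervalIntegrable, add_sub_cancel_right]

lemma intervalIntegral_tail (hA : 0 ≤ A) (hKi : Integrable K)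
    (hsupp : Function.support K ⊆ Icc A B) :
    ∫ x in (0:ℝ)..B, ∫ v in x..B, K v = ∫ u in A..B, K u * u := by
  have hB : B ∈ uIcc 0 B := right_mem_uIcc
  have hac : AbsolutelyContinuousOnInterval (fun x => ∫ v in x..B, K v) 0 B := by
    rw [tail_eq_neg_primitive]
    exact (hKi.intervalIntegrable.absolutelyContinuousOnInterval_intervalIntegral hB).neg
  have hderiv : ∀ᵐ x, x ∈ uIoc 0 B →
      deriv (fun x => ∫ v in x..B, K v) x * x = -(K x * x) := by
    filter_upwards [(hKi.intervalIntegrable (a := 0) (b := B)).ae_hasDerivAt_integral]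
      with x hx hxB
    rw [tail_eq_neg_primitive, (hx (uIoc_subset_uIcc hxB) B hB).fun_neg.deriv, neg_mul]
  have hibp := hac.integral_mul_deriv_eq_deriv_mul
    (LipschitzWith.id.lipschitzOnWith (s := uIcc 0 B)).absolutelyContinuousOnInterval
  simp only [deriv_id, mul_one, id, mul_zero, sub_zero] at hibp
  rw [hibp, intervalIntegral.integral_same, zero_mul, zero_sub,
    intervalIntegral.integral_congr_ae hderiv, intervalIntegral.integral_neg, neg_neg]
  have hKx {a b : ℝ} : IntervalIntegrable (fun u => K u * u) volume a b :=
    hKi.intervalIntegrable.mul_continuousOn continuousOn_id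
  rw [← intervalIntegral.integral_add_adjacent_intervals hKx hKx,
    intervalIntegral_eq_zero_of_forall_mem_Ioo hA fun u hu => by
      rw [Function.support_subset_iff'.1 hsupp _ fun h => hu.2.not_ge h.1, zero_mul], zero_add]

end Kernel

section Cutoff

variable {φ g : ℝ → ℝ} {T t h B r : ℝ}

lemma eqOn_cutoff_comp_mul (hh : 0 < h) (hφ0 : ∀ x ≤ 0, φ x = 1) :
    EqOn (fun s => φ ((s - t) / h) * g s) g (Iic t) := fun s hs => by
  dsimp only
  rw [hφ0 _ (div_nonpos_of_nonpos_of_nonneg (sub_nonpos.2 hs) hh.le), one_mul]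

lemma intervalIntegral_cutoff_sub_eq (hh : 0 < h) (ht : 0 ≤ t) (hB : 0 ≤ B)
    (hhB : h * B ≤ r) (htr : t + r ≤ T) (hφc : Continuous φ) (hφ0 : ∀ x ≤ 0, φ x = 1)
    (hφB : ∀ x, B ≤ x → φ x = 0) (hg0 : ContinuousOn g (Icc 0 r))
    (hgt : ContinuousOn g (Icc t (t + r))) (hg : IntervalIntegrable g volume 0 t) :
    (∫ s in (0:ℝ)..T, (φ ((s - t) / h) - φ (s / h)) * g s) - ∫ s in (0:ℝ)..t, g s
      = h * ((∫ x in (0:ℝ)..B, φ x * g (t + h * x))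
        - ∫ x in (0:ℝ)..B, φ x * g (0 + h * x)) := by
  have hr : 0 ≤ r := (mul_nonneg hh.le hB).trans hhB
  have hP : EqOn (fun s => φ ((s - t) / h) * g s) g (uIcc 0 t) :=
    (eqOn_cutoff_comp_mul hh hφ0).mono fun s hs => (uIcc_of_le ht ▸ hs).2
  have hP0t : IntervalIntegrable (fun s => φ ((s - t) / h) * g s) volume 0 t :=
    (intervalIntegrable_congr (hP.mono uIoc_subset_uIcc)).2 hg
  have hPtT : IntervalIntegrable (fun s => φ ((s - t) / h) * g s) volume t T :=
    intervalIntegrable_comp_div_sub_mul hh (by linarith) hhB hφc hφB hgt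
  have hQ : IntervalIntegrable (fun s => φ ((s - 0) / h) * g s) volume 0 T :=
    intervalIntegrable_comp_div_sub_mul hh (by linarith) hhB hφc hφB (by rwa [zero_add])
  have hQT := intervalIntegral_comp_div_sub_mul (c := 0) (d := T) (g := g) hh hB (by linarith) hφB
  simp only [sub_zero] at hQ hQT
  simp only [sub_mul]
  rw [intervalIntegral.integral_sub (hP0t.trans hPtT) hQ,
    ← intervalIntegral.integral_add_adjacent_intervals hP0t hPtT,
    intervalIntegral.integral_congr hP,
    intervalIntegral_comp_div_sub_mul hh hB (by linarith) hφB, hQT]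
  ring

lemma intervalIntegrable_of_intervalIntegrable_cutoff_sub (hh : 0 < h) (ht : 0 ≤ t)
    (htT : t ≤ T) (hhB : h * B ≤ r) (hφc : Continuous φ) (hφ0 : ∀ x ≤ 0, φ x = 1)
    (hφB : ∀ x, B ≤ x → φ x = 0) (hg0 : ContinuousOn g (Icc 0 r))
    (hint : IntervalIntegrable (fun s => (φ ((s - t) / h) - φ (s / h)) * g s) volume 0 T) :
    IntervalIntegrable g volume 0 t := by
  have hQ : IntervalIntegrable (fun s => φ ((s - 0) / h) * g s) volume 0 T :=
    intervalIntegrable_comp_div_sub_mul hh (by linarith) hhB hφc hφB (by rwa [zero_add])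
  simp only [sub_zero] at hQ
  have hP : IntervalIntegrable (fun s => φ ((s - t) / h) * g s) volume 0 T := by
    convert hint.add hQ using 2; ring
  exact (intervalIntegrable_congr ((eqOn_cutoff_comp_mul hh hφ0).mono
    fun s hs => (uIoc_of_le ht ▸ hs).2)).1
      (hP.mono_set (uIcc_subset_uIcc left_mem_uIcc (mem_uIcc_of_le ht htT)))

end Cutoff

lemma tendsto_intervalIntegral_mul_comp_add_mul {φ g : ℝ → ℝ} {p r B : ℝ} (hr : 0 < r)
    (hB : 0 < B) (hφ : IntervalIntegrable φ volume 0 B) (hg : ContinuousOn g (Icc p (p + r))) :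
    Tendsto (fun h => ∫ x in (0:ℝ)..B, φ x * g (p + h * x)) (𝓝[>] 0)
      (𝓝 ((∫ x in (0:ℝ)..B, φ x) * g p)) := by
  obtain ⟨M, hM⟩ := isCompact_Icc.exists_bound_of_continuousOn hg
  have hsmall : ∀ᶠ h in 𝓝[>] (0:ℝ), h ∈ Ioo 0 (r / B) := Ioo_mem_nhdsGT (div_pos hr hB)
  have hmaps {h : ℝ} (hh : h ∈ Ioo 0 (r / B)) :
      MapsTo (fun x => p + h * x) (Icc 0 B) (Icc p (p + r)) := fun x hx => by
    have : h * x ≤ r :=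
      (mul_le_mul hh.2.le hx.2 hx.1 (div_pos hr hB).le).trans_eq (div_mul_cancel₀ r hB.ne')
    exact ⟨by nlinarith [hh.1, hx.1], by linarith⟩
  rw [← intervalIntegral.integral_mul_const]
  refine intervalIntegral.tendsto_integral_filter_of_dominated_convergence
    (fun x => ‖φ x‖ * M) ?_ ?_ (hφ.norm.mul_const M) ?_
  · filter_upwards [hsmall] with h hh
    refine hφ.def'.aestronglyMeasurable.mul ?_
    refine ContinuousOn.aestronglyMeasurable ?_ measurableSet_uIoc
    exact (hg.comp (by fun_prop) (hmaps hh)).mono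
      (by rw [uIoc_of_le hB.le]; exact Ioc_subset_Icc_self)
  · filter_upwards [hsmall] with h hh
    refine Eventually.of_forall fun x hx => ?_
    rw [uIoc_of_le hB.le] at hx
    rw [norm_mul]
    exact mul_le_mul_of_nonneg_left (hM _ (hmaps hh (Ioc_subset_Icc_self hx))) (norm_nonneg _)
  · refine Eventually.of_forall fun x hx => ?_
    rw [uIoc_of_le hB.le] at hx
    have hlin : Tendsto (fun h => p + h * x) (𝓝[>] 0) (𝓝[Icc p (p + r)] p) := by
      refine tendsto_nhdsWithin_iff.2 ⟨?_, ?_⟩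
      · have : Continuous fun h : ℝ => p + h * x := by fun_prop
        simpa using this.continuousWithinAt (s := Ioi 0) (x := 0) |>.tendsto
      · filter_upwards [hsmall] with h hh using hmaps hh (Ioc_subset_Icc_self hx)
    exact ((hg p (left_mem_Icc.2 (by linarith))).tendsto.comp hlin).const_mul (φ x)

lemma tendsto_intervalIntegral_tail_mul_sub {K g : ℝ → ℝ} {A B t r : ℝ} (hA : 0 ≤ A) (hB : 0 < B)
    (hKi : Integrable K) (hsupp : Function.support K ⊆ Icc A B) (hr : 0 < r)
    (hg0 : ContinuousOn g (Icc 0 r)) (hgt : ContinuousOn g (Icc t (t + r))) :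
    Tendsto (fun h => (∫ x in (0:ℝ)..B, (∫ v in x..B, K v) * g (t + h * x))
        - ∫ x in (0:ℝ)..B, (∫ v in x..B, K v) * g (0 + h * x)) (𝓝[>] 0)
      (𝓝 ((g t - g 0) * ∫ u in A..B, K u * u)) := by
  have hG : IntervalIntegrable (fun x => ∫ v in x..B, K v) volume 0 B :=
    (continuous_tail hKi).intervalIntegrable 0 B
  have := (tendsto_intervalIntegral_mul_comp_add_mul hr hB hG hgt).sub
    (tendsto_intervalIntegral_mul_comp_add_mul hr hB hG (p := 0) (by rwa [zero_add]))
  rwa [intervalIntegral_tail hA hKi hsupp, ← mul_sub, mul_comm] at this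

lemma eq_zero_of_forall_intervalIntegral_eq_zero {g : ℝ → ℝ} {p r : ℝ} (hr : 0 < r)
    (hg : ContinuousOn g (Icc p (p + r))) (hz : ∀ s ∈ Icc p (p + r), ∫ x in p..s, g x = 0) :
    g p = 0 := by
  have hIcc : Icc p (p + r) ∈ 𝓝[≥] p := Icc_mem_nhdsGE (by linarith)
  have hIcc' : Icc p (p + r) ∈ 𝓝[>] p := nhdsWithin_mono p Ioi_subset_Ici_self hIcc
  have hftc : HasDerivWithinAt (fun s => ∫ x in p..s, g x) (g p) (Ici p) p :=
    intervalIntegral.integral_hasDerivWithinAt_right IntervalIntegrable.refl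
      ⟨Icc p (p + r), hIcc', hg.aestronglyMeasurable measurableSet_Icc⟩
      ((hg p (left_mem_Icc.2 (by linarith))).mono_of_mem_nhdsWithin hIcc')
  have hconst : HasDerivWithinAt (fun s => ∫ x in p..s, g x) 0 (Ici p) p :=
    (hasDerivWithinAt_const p (Ici p) (0:ℝ)).congr_of_eventuallyEq
      (eventually_of_mem hIcc hz) (hz p (left_mem_Icc.2 (by linarith)))
  exact (uniqueDiffWithinAt_Ici p).eq_deriv _ hftc hconst

lemma eq_of_not_intervalIntegrable {y g : ℝ → ℝ} {T t r : ℝ}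
    (hrep : ∀ a ∈ Icc (0:ℝ) T, ∀ b ∈ Icc (0:ℝ) T, y b - y a = ∫ s in a..b, g s)
    (hrt : r ≤ t) (htr : t + r ≤ T) (hg0 : ContinuousOn g (Icc 0 r))
    (hg : ¬ IntervalIntegrable g volume 0 t) :
    ∀ a ∈ Icc 0 r, ∀ b ∈ Icc t (t + r), y b = y a := fun a ha b hb => by
  have hab : ¬ IntervalIntegrable g volume a b := fun hab => hg <| by
    have h0a : IntervalIntegrable g volume 0 a :=
      (hg0.mono (by rw [uIcc_of_le ha.1]; exact Icc_subset_Icc_right ha.2)).intervalIntegrable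
    exact h0a.trans (hab.mono_set (by
      rw [uIcc_of_le (ha.2.trans hrt), uIcc_of_le (ha.2.trans (hrt.trans hb.1))]
      exact Icc_subset_Icc_right hb.1))
  have := hrep a ⟨ha.1, by linarith [ha.1, ha.2]⟩ b ⟨by linarith [ha.1, ha.2, hb.1], by linarith [ha.1, ha.2, hb.2]⟩
  rw [intervalIntegral.integral_undef hab] at this
  linarith

lemma eq_zero_of_not_intervalIntegrable {y g : ℝ → ℝ} {T t r : ℝ}
    (hrep : ∀ a ∈ Icc (0:ℝ) T, ∀ b ∈ Icc (0:ℝ) T, y b - y a = ∫ s in a..b, g s)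
    (ht : 0 ≤ t) (hr : 0 < r) (htr : t + r ≤ T)
    (hg0 : ContinuousOn g (Icc 0 r)) (hgt : ContinuousOn g (Icc t (t + r)))
    (hg : ¬ IntervalIntegrable g volume 0 t) : g 0 = 0 ∧ g t = 0 := by
  have ht0 : 0 < t := ht.lt_of_ne (by rintro rfl; exact hg .refl)
  obtain ⟨ρ, hρ, hρt, hρr⟩ : ∃ ρ, 0 < ρ ∧ ρ ≤ t ∧ ρ ≤ r :=
    ⟨min r t, lt_min hr ht0, min_le_right r t, min_le_left r t⟩
  have hconst := eq_of_not_intervalIntegrable hrep hρt (by linarith)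
    (hg0.mono (Icc_subset_Icc_right hρr)) hg
  have h0 : (0:ℝ) ∈ Icc 0 ρ := left_mem_Icc.2 hρ.le
  have ht : t ∈ Icc t (t + ρ) := left_mem_Icc.2 (by linarith)
  constructor
  · refine eq_zero_of_forall_intervalIntegral_eq_zero hρ
      (hg0.mono (by rw [zero_add]; exact Icc_subset_Icc_right hρr)) fun s hs => ?_
    rw [zero_add] at hs
    rw [← hrep 0 ⟨le_rfl, by linarith⟩ s ⟨hs.1, by linarith [hs.2]⟩,
      ← hconst s hs t ht, hconst 0 h0 t ht, sub_self]
  · refine eq_zero_of_forall_intervalIntegral_eq_zero hρ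
      (hgt.mono (Icc_subset_Icc_right (by linarith))) fun s hs => ?_
    rw [← hrep t ⟨by linarith, by linarith⟩ s ⟨by linarith [hs.1], by linarith [hs.2]⟩,
      hconst 0 h0 s hs, hconst 0 h0 t ht, sub_self]

lemma tendsto_rpow_nhdsGT_zero {α : ℝ} (hα : 0 < α) :
    Tendsto (fun ε : ℝ => ε ^ α) (𝓝[>] 0) (𝓝[>] 0) := by
  refine tendsto_nhdsWithin_iff.2 ⟨?_, ?_⟩
  · simpa [Real.zero_rpow hα.ne'] using
      (Real.continuousAt_rpow_const 0 α (Or.inr hα.le)).tendsto.mono_left nhdsWithin_le_nhds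
  · filter_upwards [self_mem_nhdsWithin] with ε hε using Real.rpow_pos_of_pos hε α

lemma exists_continuousOn_Icc {g : ℝ → ℝ} {T t δ : ℝ} (hδ : 0 < δ) (ht : t ∈ Ico 0 T)
    (hg : ContinuousOn g ((Ioo (-δ) δ ∪ Ioo (t - δ) (t + δ)) ∩ Icc 0 T)) :
    ∃ r, 0 < r ∧ t + r ≤ T ∧ ContinuousOn g (Icc 0 r) ∧ ContinuousOn g (Icc t (t + r)) := by
  obtain ⟨ht0, htT⟩ := ht
  have hr : 0 < min (δ / 2) (T - t) := lt_min (half_pos hδ) (sub_pos.2 htT)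
  have hrδ := min_le_left (δ / 2) (T - t)
  have hrT := min_le_right (δ / 2) (T - t)
  refine ⟨_, hr, by linarith, hg.mono fun x hx => ?_, hg.mono fun x hx => ?_⟩
  · exact ⟨Or.inl ⟨by linarith [hx.1], by linarith [hx.2]⟩, hx.1, by linarith [hx.2]⟩
  · exact ⟨Or.inr ⟨by linarith [hx.1], by linarith [hx.2]⟩, by linarith [hx.1],
      by linarith [hx.2]⟩

end EtaAsymptotics

open EtaAsymptotics

theorem eta_asymptotics_general (T H A B : ℝ) (hH : H ∈ Set.Ioo (1/2 : ℝ) 1)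
    (hA : 0 ≤ A) (hAB : A < B)
    (y yd : ℝ → ℝ)
    (hrep : ∀ a ∈ Set.Icc (0:ℝ) T, ∀ b ∈ Set.Icc (0:ℝ) T, y b - y a = ∫ s in a..b, yd s)
    (t : ℝ) (ht : t ∈ Set.Ico (0:ℝ) T)
    (hcont : ∃ δ : ℝ, 0 < δ ∧ ContinuousOn yd
      ((Set.Ioo (-δ) δ ∪ Set.Ioo (t - δ) (t + δ)) ∩ Set.Icc (0:ℝ) T))
    (K : ℝ → ℝ)
    (hsupp : Function.support K ⊆ Set.Icc A B) (hKint : ∫ v in A..B, K v = 1) :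
    Tendsto (fun ε : ℝ =>
        ε ^ (-(1 / (2 - H))) *
          ((∫ s in (0:ℝ)..T,
              (∫ u in (0:ℝ)..t,
                (1 / ε ^ (1 / (2 - H))) * K ((s - u) / ε ^ (1 / (2 - H)))) * yd s)
            - (y t - y 0)))
      (𝓝[>] (0:ℝ)) (𝓝 ((yd t - yd 0) * ∫ u in A..B, K u * u)) := by
  obtain ⟨r, hr, htr, hyd0, hydt⟩ := hcont.elim fun δ hδ => exists_continuousOn_Icc hδ.1 ht hδ.2
  have hB : 0 < B := hA.trans_lt hAB
  have hKi : Integrable K := integrable_of_intervalIntegrable_of_support_subset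
    (intervalIntegral.intervalIntegrable_of_integral_ne_zero (hKint ▸ one_ne_zero)) hsupp
  have hG1 (x : ℝ) (hx : x ≤ 0) := tail_eq_one_of_le_left hKi hsupp hKint (hx.trans hA)
  have hG0 (x : ℝ) (hx : B ≤ x) := tail_eq_zero_of_right_le hsupp hx
  have hpow := tendsto_rpow_nhdsGT_zero (α := 1 / (2 - H)) (div_pos one_pos (by linarith [hH.2]))
  have hsmall : ∀ᶠ ε in 𝓝[>] 0, 0 < ε ^ (1 / (2 - H)) ∧ ε ^ (1 / (2 - H)) * B ≤ r :=
    (hpow.eventually (Ioo_mem_nhdsGT (div_pos hr hB))).mono fun ε hε =>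
      ⟨hε.1, ((lt_div_iff₀ hB).1 hε.2).le⟩
  have hrep0t := hrep 0 ⟨le_rfl, ht.1.trans ht.2.le⟩ t ⟨ht.1, ht.2.le⟩
  by_cases hint : IntervalIntegrable yd volume 0 t
  · refine ((tendsto_intervalIntegral_tail_mul_sub hA hB hKi hsupp hr hyd0 hydt).comp
      hpow).congr' ?_
    filter_upwards [self_mem_nhdsWithin, hsmall] with ε hε ⟨hh, hhB⟩
    simp_rw [hrep0t, intervalIntegral_rescaled_kernel (B := B) hKi hh]
    rw [intervalIntegral_cutoff_sub_eq hh ht.1 hB.le hhB htr (continuous_tail hKi) hG1 hG0 hyd0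
      hydt hint, Real.rpow_neg hε.le, inv_mul_cancel_left₀ hh.ne']
    rfl
  · obtain ⟨hz0, hzt⟩ := eq_zero_of_not_intervalIntegrable hrep ht.1 hr htr hyd0 hydt hint
    rw [hz0, hzt, sub_self, zero_mul]
    refine tendsto_const_nhds.congr' ?_
    filter_upwards [self_mem_nhdsWithin, hsmall] with ε hε ⟨hh, hhB⟩
    simp_rw [hrep0t, intervalIntegral_rescaled_kernel (B := B) hKi hh]
    rw [intervalIntegral.integral_undef hint, intervalIntegral.integral_undef
      (mt (intervalIntegrable_of_intervalIntegrable_cutoff_sub hh ht.1 ht.2.le hhB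
        (continuous_tail hKi) hG1 hG0 hyd0) hint), sub_zero, mul_zero]

/-- Asymptotic bias identification for `η_ε(t)` in Proposition 3.8: for `y` Lipschitz with
a.e. derivative `yd` continuous near `0` and near `t`, with `h_ε = ε^{1/(2-H)}` and
`η_ε(t) = ∫_0^T (∫_0^t K_{h_ε}(s-u) du) ẏ(s) ds - (y(t) - y(0))`,
`ε^{-1/(2-H)} η_ε(t) → (ẏ(t) - ẏ(0)) ∫_A^B K(u) u du` as `ε → 0⁺`. -/
theorem eta_asymptotics (T H A B : ℝ) (hT : 0 < T) (hH : H ∈ Set.Ioo (1/2 : ℝ) 1)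
    (hA : 0 ≤ A) (hAB : A < B)
    (y yd : ℝ → ℝ) (Λ : NNReal) (hy : LipschitzOnWith Λ y (Set.Icc 0 T))
    (hrep : ∀ a ∈ Set.Icc (0:ℝ) T, ∀ b ∈ Set.Icc (0:ℝ) T, y b - y a = ∫ s in a..b, yd s)
    (t : ℝ) (ht : t ∈ Set.Ico (0:ℝ) T)
    (hcont : ∃ δ : ℝ, 0 < δ ∧ ContinuousOn yd
      ((Set.Ioo (-δ) δ ∪ Set.Ioo (t - δ) (t + δ)) ∩ Set.Icc (0:ℝ) T))
    (K : ℝ → ℝ) (hK0 : ∀ v, 0 ≤ K v) (hKbdd : ∃ C, ∀ v, K v ≤ C)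
    (hsupp : Function.support K ⊆ Set.Icc A B) (hKint : ∫ v in A..B, K v = 1) :
    Tendsto (fun ε : ℝ =>
        ε ^ (-(1 / (2 - H))) *
          ((∫ s in (0:ℝ)..T,
              (∫ u in (0:ℝ)..t,
                (1 / ε ^ (1 / (2 - H))) * K ((s - u) / ε ^ (1 / (2 - H)))) * yd s)
            - (y t - y 0)))
      (𝓝[>] (0:ℝ)) (𝓝 ((yd t - yd 0) * ∫ u in A..B, K u * u)) :=
  eta_asymptotics_general T H A B hH hA hAB y yd hrep t ht hcont K hsupp hKint
end
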